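/- Let σ_v, σ_A, σ_B be n-qubit Pauli operators and let γ ∈ {1, −1, i, −i} be such that γ σ_v σ_A σ_B is an n-qubit Pauli operator. Then ⟨S(σ_v, σ_A), S(γ σ_v σ_A σ_B, σ_B)⟩ = 0 if and only if γ ∈ {i, −i}. -/
import Mathlib


/-- The four one-qubit Pauli matrices. -/
noncomputable def pauli1 : Fin 4 → Matrix (Fin 2) (Fin 2) ℂ
  | 0 => !![1, 0; 0, 1]
  | 1 => !![0, 1; 1, 0]
  | 2 => !![0, -Complex.I; Complex.I, 0]
  | 3 => !![1, 0; 0, -1]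

/-- The `n`-qubit Pauli operator `σ_r = σ_{r_1} ⊗ ⋯ ⊗ σ_{r_n}`. -/
noncomputable def pauli {n : ℕ} (r : Fin n → Fin 4) :
    Matrix (Fin n → Fin 2) (Fin n → Fin 2) ℂ :=
  fun x y => ∏ i, pauli1 (r i) (x i) (y i)


/-- The Choi vector `|A⟩⟩ = Σ_i e_i ⊗ A e_i`: its `(i, j)` component is `A j i`. -/
noncomputable def choiVec {D : Type*} (A : Matrix D D ℂ) : D × D → ℂ :=
  fun x => A x.2 x.1

/-- `S(U, V) := |0⟩⊗|0⟩⊗|VU⟩⟩ + |1⟩⊗|1⟩⊗|UV⟩⟩ ∈ ℂ² ⊗ ℂ² ⊗ ℂ^d ⊗ ℂ^d`. -/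
noncomputable def SVec {D : Type*} [Fintype D] [DecidableEq D] (U V : Matrix D D ℂ) :
    Fin 2 × Fin 2 × D × D → ℂ :=
  fun x => (if x.1 = 0 ∧ x.2.1 = 0 then choiVec (V * U) x.2.2 else 0) +
    (if x.1 = 1 ∧ x.2.1 = 1 then choiVec (U * V) x.2.2 else 0)

lemma pauli1_conj (k : Fin 4) (a b : Fin 2) :
    (starRingEnd ℂ) (pauli1 k a b) = pauli1 k b a := by
  fin_cases k <;> fin_cases a <;> fin_cases b <;> simp [pauli1]

lemma pauli1_mul_self (k : Fin 4) : pauli1 k * pauli1 k = 1 := by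
  fin_cases k <;> ext a b <;> fin_cases a <;> fin_cases b <;>
    simp [pauli1, Matrix.mul_apply, Fin.sum_univ_two, Matrix.one_apply, Complex.I_mul_I]

lemma pauli_conj {n : ℕ} (r : Fin n → Fin 4) (x y : Fin n → Fin 2) :
    (starRingEnd ℂ) (pauli r x y) = pauli r y x := by
  simp [pauli, map_prod, pauli1_conj]

lemma pauli_mul_self {n : ℕ} (r : Fin n → Fin 4) : pauli r * pauli r = 1 := by
  ext x y
  simp only [Matrix.mul_apply, pauli, ← Finset.prod_mul_distrib]
  have hps := Finset.prod_univ_sum (fun _ : Fin n => (Finset.univ : Finset (Fin 2)))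
    (fun i c => pauli1 (r i) (x i) c * pauli1 (r i) c (y i))
  rw [Fintype.piFinset_univ] at hps
  rw [← hps]
  have : ∀ i : Fin n, (∑ c : Fin 2, pauli1 (r i) (x i) c * pauli1 (r i) c (y i))
      = (1 : Matrix (Fin 2) (Fin 2) ℂ) (x i) (y i) := by
    intro i
    rw [← Matrix.mul_apply, pauli1_mul_self]
  simp only [this, Matrix.one_apply]
  by_cases h : x = y
  · simp [h]
  · simp only [h, if_false]
    obtain ⟨i, hi⟩ := Function.ne_iff.mp h
    exact Finset.prod_eq_zero (Finset.mem_univ i) (by simp [hi])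

lemma pauli_mul_conj {n : ℕ} (r s : Fin n → Fin 4) (i j : Fin n → Fin 2) :
    (starRingEnd ℂ) ((pauli r * pauli s) i j) = (pauli s * pauli r) j i := by
  simp [Matrix.mul_apply, map_sum, pauli_conj, mul_comm]

lemma sum_eq_trace {D : Type*} [Fintype D] (A B : Matrix D D ℂ) :
    (∑ p : D × D, A p.1 p.2 * B p.2 p.1) = (A * B).trace := by
  simp [Matrix.trace, Matrix.diag, Matrix.mul_apply, Fintype.sum_prod_type]


/-- if `γ ∈ {1, −1, i, −i}` is such that `γ σ_v σ_A σ_B` is an `n`-qubit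
Pauli operator, then `⟨S(σ_v, σ_A), S(γ σ_v σ_A σ_B, σ_B)⟩ = 0` iff `γ = ±i`. -/
theorem stmt_16 (n : ℕ) (v A B : Fin n → Fin 4) (γ : ℂ)
    (hγ : γ = 1 ∨ γ = -1 ∨ γ = Complex.I ∨ γ = -Complex.I)
    (hp : ∃ w : Fin n → Fin 4, γ • (pauli v * pauli A * pauli B) = pauli w) :
    (∑ x, (starRingEnd ℂ) (SVec (pauli v) (pauli A) x) *
        SVec (γ • (pauli v * pauli A * pauli B)) (pauli B) x = 0) ↔
      (γ = Complex.I ∨ γ = -Complex.I) := by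

  classical
  obtain ⟨w, hw⟩ := hp
  set M := pauli v with hMdef
  set N := pauli A with hNdef
  set P := pauli B with hPdef
  set Q := M * N * P with hQdef
  set W := γ • Q with hWdef
  have hM : M * M = 1 := pauli_mul_self v
  have hN : N * N = 1 := pauli_mul_self A
  have hP : P * P = 1 := pauli_mul_self B
  have hcard : ((1 : Matrix (Fin n → Fin 2) (Fin n → Fin 2) ℂ)).trace = (2 : ℂ) ^ n := by
    simp [Matrix.trace_one]
  -- step 1: rewrite the sum
  have step1 : (∑ x, (starRingEnd ℂ) (SVec M N x) * SVec W P x)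
      = (∑ p : (Fin n → Fin 2) × (Fin n → Fin 2),
          (starRingEnd ℂ) ((N * M) p.2 p.1) * (P * W) p.2 p.1)
        + ∑ p : (Fin n → Fin 2) × (Fin n → Fin 2),
          (starRingEnd ℂ) ((M * N) p.2 p.1) * (W * P) p.2 p.1 := by
    rw [Fintype.sum_prod_type]
    rw [Fin.sum_univ_two]
    simp [SVec, choiVec, Fin.sum_univ_two, Fintype.sum_prod_type]
  have step2 : (∑ p : (Fin n → Fin 2) × (Fin n → Fin 2),
      (starRingEnd ℂ) ((N * M) p.2 p.1) * (P * W) p.2 p.1) = ((M * N) * (P * W)).trace := by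
    rw [← sum_eq_trace]
    refine Finset.sum_congr rfl fun p _ => ?_
    rw [pauli_mul_conj]
  have step3 : (∑ p : (Fin n → Fin 2) × (Fin n → Fin 2),
      (starRingEnd ℂ) ((M * N) p.2 p.1) * (W * P) p.2 p.1) = ((N * M) * (W * P)).trace := by
    rw [← sum_eq_trace]
    refine Finset.sum_congr rfl fun p _ => ?_
    rw [pauli_mul_conj]
  -- trace computations
  have t1 : ((M * N) * (P * W)).trace = γ * (Q * Q).trace := by
    have : (M * N) * (P * W) = γ • (Q * Q) := by
      rw [hWdef, Matrix.mul_smul, Matrix.mul_smul, hQdef]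
      rw [mul_assoc (M*N) P (M*N*P)]
    rw [this, Matrix.trace_smul, smul_eq_mul]
  have t2 : ((N * M) * (W * P)).trace = γ * (2 : ℂ) ^ n := by
    have h1 : (N * M) * (Q * P) = 1 := by
      rw [hQdef, mul_assoc (M*N) P P, hP, mul_one, mul_assoc N M (M*N),
        ← mul_assoc M M N, hM, one_mul, hN]
    have : (N * M) * (W * P) = γ • (1 : Matrix (Fin n → Fin 2) (Fin n → Fin 2) ℂ) := by
      rw [hWdef, Matrix.smul_mul, Matrix.mul_smul, h1]
    rw [this, Matrix.trace_smul, smul_eq_mul, hcard]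
  have tQQ : (γ * γ) * (Q * Q).trace = (2 : ℂ) ^ n := by
    have : (γ • Q) * (γ • Q) = 1 := by rw [← hWdef, hw]; exact pauli_mul_self w
    rw [Matrix.smul_mul, Matrix.mul_smul, smul_smul] at this
    calc (γ * γ) * (Q * Q).trace = ((γ * γ) • (Q * Q)).trace := by
          rw [Matrix.trace_smul, smul_eq_mul]
      _ = (2 : ℂ) ^ n := by rw [this, hcard]
  have hγ0 : γ ≠ 0 := by
    rcases hγ with rfl | rfl | rfl | rfl <;> simp [Complex.I_ne_zero]
  have h2n : (2 : ℂ) ^ n ≠ 0 := pow_ne_zero n two_ne_zero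
  have key : γ * (∑ x, (starRingEnd ℂ) (SVec M N x) * SVec W P x)
      = (1 + γ * γ) * (2 : ℂ) ^ n := by
    rw [step1, step2, step3, t1, t2]
    linear_combination tQQ
  constructor
  · intro h
    rw [h, mul_zero] at key
    have h0 : (1 + γ * γ) = 0 := by
      rcases mul_eq_zero.mp key.symm with h' | h'
      · exact h'
      · exact absurd h' h2n
    rcases hγ with rfl | rfl | rfl | rfl
    · norm_num at h0
    · norm_num at h0
    · left; rfl
    · right; rfl
  · intro h
    have h0 : (1 + γ * γ) = 0 := by
      rcases h with rfl | rfl <;> simp [Complex.I_mul_I]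
    rw [h0, zero_mul] at key
    rcases mul_eq_zero.mp key with h' | h'
    · exact absurd h' hγ0
    · exact h'
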